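/- Let ℓ : ℝ^{d×d'} → ℝ be differentiable, N ≥ 2 an integer, and let W : I → ℝ^{d×d'}, U : I → ℝ^{d×k}, σ : I → ℝ^k, V : I → ℝ^{d'×k} (k := min(d, d')) be a differentiable SVD path on an open interval I. Suppose the product matrix obeys the deep-factorization gradient-flow dynamics: for every t ∈ I, W′(t) = −T_N(U(t), σ(t), V(t), ∇ℓ(W(t))). Then for every t ∈ I and every r, the signed singular values evolve by σ_r′(t) = −N · (σ_r(t)²)^{1−1/N} · u_r(t)ᵀ · ∇ℓ(W(t)) · v_r(t). -/

import Mathlib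

/-!
Differentiating `W = U Σ Vᵀ` and projecting onto `uᵣ` and `vᵣ` gives `σᵣ′ = uᵣᵀ W′ vᵣ`: the two
other terms of the product rule vanish because `‖uᵣ‖ = ‖vᵣ‖ = 1` forces `uᵣᵀ uᵣ′ = vᵣᵀ vᵣ′ = 0`.
In the same basis `Uᵀ T_N(M) V = ∑ⱼ Σ^{2(j-1)/N} (UᵀMV) Σ^{2(N-j)/N}`, a sum of `N` matrices whose
`(r, r)` entries all equal `(σᵣ²)^{(N-1)/N} (UᵀMV)ᵣᵣ`.
-/

open Matrix

/-- `dpow σ β` is the `k×k` diagonal matrix with `r`-th diagonal entry `(σᵣ²)^β`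
(real power, with the convention `x⁰ = 1`). -/
noncomputable def dpow {k : ℕ} (σ : Fin k → ℝ) (β : ℝ) : Matrix (Fin k) (Fin k) ℝ :=
  Matrix.diagonal (fun r => (σ r ^ 2) ^ β)

/-- `TN N U σ V M` is the right-hand side of the gradient-flow dynamics of the product
matrix of a depth-`N` matrix factorization with balanced initialization, expressed
through a singular value decomposition `W = U·diag(σ)·Vᵀ`. -/
noncomputable def TN {d d' k : ℕ} (N : ℕ) (U : Matrix (Fin d) (Fin k) ℝ)
    (σ : Fin k → ℝ) (V : Matrix (Fin d') (Fin k) ℝ) (M : Matrix (Fin d) (Fin d') ℝ) :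
    Matrix (Fin d) (Fin d') ℝ :=
  M * V * dpow σ (((N : ℝ) - 1) / N) * Vᵀ +
  (∑ j ∈ Finset.Icc 2 (N - 1),
    U * dpow σ (((j : ℝ) - 1) / N) * Uᵀ * M * V * dpow σ (((N : ℝ) - (j : ℝ)) / N) * Vᵀ) +
  U * dpow σ (((N : ℝ) - 1) / N) * Uᵀ * M

open Filter Topology Finset

section EntrywiseDerivatives

variable {l m n : Type*} {t : ℝ}

theorem hasDerivAt_matrix_mul_apply [Fintype m] {A : ℝ → Matrix l m ℝ} {B : ℝ → Matrix m n ℝ}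
    {A' : Matrix l m ℝ} {B' : Matrix m n ℝ}
    (hA : ∀ i j, HasDerivAt (fun s => A s i j) (A' i j) t)
    (hB : ∀ j k, HasDerivAt (fun s => B s j k) (B' j k) t) (i : l) (k : n) :
    HasDerivAt (fun s => (A s * B s) i k) ((A' * B t + A t * B') i k) t := by
  rw [show (fun s => (A s * B s) i k) = fun s => ∑ j, A s i j * B s j k from
    funext fun s => Matrix.mul_apply, Matrix.add_apply, Matrix.mul_apply, Matrix.mul_apply,
    ← Finset.sum_add_distrib]
  exact HasDerivAt.fun_sum fun j _ => (hA i j).mul (hB j k)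

theorem hasDerivAt_diagonal_apply [DecidableEq m] {σ : ℝ → m → ℝ} {σ' : m → ℝ}
    (hσ : ∀ r, HasDerivAt (fun s => σ s r) (σ' r) t) (i j : m) :
    HasDerivAt (fun s => diagonal (σ s) i j) (diagonal σ' i j) t := by
  by_cases hij : i = j
  · subst hij
    simpa only [diagonal_apply_eq] using hσ i
  · simpa only [diagonal_apply_ne _ hij] using hasDerivAt_const t (0 : ℝ)

theorem transpose_mul_deriv_apply_self_eq_zero [Fintype n] [DecidableEq m]
    {F : ℝ → Matrix n m ℝ} {F' : Matrix n m ℝ}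
    (hF : ∀ p q, HasDerivAt (fun s => F s p q) (F' p q) t)
    (horth : ∀ᶠ s in 𝓝 t, (F s)ᵀ * F s = 1) (r : m) :
    ((F t)ᵀ * F') r r = 0 := by
  have hprod := hasDerivAt_matrix_mul_apply (A := fun s => (F s)ᵀ) (A' := F'ᵀ)
    (fun i j => hF j i) hF r r
  have hconst : HasDerivAt (fun s => ((F s)ᵀ * F s) r r) 0 t :=
    (hasDerivAt_const t (1 : ℝ)).congr_of_eventuallyEq
      (horth.mono fun s hs => by simp only [hs, one_apply_eq])
  have hsymm : (F'ᵀ * F t) r r = ((F t)ᵀ * F') r r := by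
    simp only [Matrix.mul_apply, transpose_apply, mul_comm]
  have := hprod.unique hconst
  rw [Matrix.add_apply, hsymm] at this
  linarith

end EntrywiseDerivatives

section SVDPath

variable {m n k : Type*} [Fintype m] [Fintype n] [Fintype k] [DecidableEq k]

theorem svd_deriv_diag_apply {U U' : Matrix m k ℝ} {V V' : Matrix n k ℝ} {σ σ' : k → ℝ}
    (hU : Uᵀ * U = 1) (hV : Vᵀ * V = 1) {r : k} (hUU' : (Uᵀ * U') r r = 0)
    (hVV' : (Vᵀ * V') r r = 0) :
    (Uᵀ * ((U' * diagonal σ + U * diagonal σ') * Vᵀ + U * diagonal σ * V'ᵀ) * V) r r =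
      σ' r := by
  have hV'V : (V'ᵀ * V) r r = 0 := by
    rw [← hVV']
    simp only [Matrix.mul_apply, transpose_apply, mul_comm]
  have hexpand : Uᵀ * ((U' * diagonal σ + U * diagonal σ') * Vᵀ + U * diagonal σ * V'ᵀ) * V =
      Uᵀ * U' * diagonal σ * (Vᵀ * V) + Uᵀ * U * diagonal σ' * (Vᵀ * V) +
        Uᵀ * U * diagonal σ * (V'ᵀ * V) := by
    simp only [Matrix.mul_add, Matrix.add_mul, Matrix.mul_assoc]
  rw [hexpand, hU, hV, Matrix.mul_one, Matrix.mul_one, Matrix.one_mul, Matrix.one_mul]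
  simp [mul_diagonal, diagonal_mul, hUU', hV'V]

theorem singularValue_deriv_eq {W : ℝ → Matrix m n ℝ} {U : ℝ → Matrix m k ℝ}
    {σ : ℝ → k → ℝ} {V : ℝ → Matrix n k ℝ} {W' : Matrix m n ℝ} {U' : Matrix m k ℝ}
    {σ' : k → ℝ} {V' : Matrix n k ℝ} {t : ℝ}
    (hW : ∀ p q, HasDerivAt (fun s => W s p q) (W' p q) t)
    (hU : ∀ p q, HasDerivAt (fun s => U s p q) (U' p q) t)
    (hσ : ∀ r, HasDerivAt (fun s => σ s r) (σ' r) t)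
    (hV : ∀ p q, HasDerivAt (fun s => V s p q) (V' p q) t)
    (hSVD : ∀ᶠ s in 𝓝 t, W s = U s * diagonal (σ s) * (V s)ᵀ)
    (hUorth : ∀ᶠ s in 𝓝 t, (U s)ᵀ * U s = 1) (hVorth : ∀ᶠ s in 𝓝 t, (V s)ᵀ * V s = 1)
    (r : k) :
    σ' r = ((U t)ᵀ * W' * V t) r r := by
  have hW' : W' = (U' * diagonal (σ t) + U t * diagonal σ') * (V t)ᵀ +
      U t * diagonal (σ t) * V'ᵀ := by
    ext p q
    have hprod := hasDerivAt_matrix_mul_apply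
      (hasDerivAt_matrix_mul_apply hU (hasDerivAt_diagonal_apply hσ)) (B := fun s => (V s)ᵀ)
      (B' := V'ᵀ) (fun i j => hV j i) p q
    exact (hW p q).unique
      (hprod.congr_of_eventuallyEq (hSVD.mono fun s hs => congrFun (congrFun hs p) q))
  rw [hW', svd_deriv_diag_apply hUorth.self_of_nhds hVorth.self_of_nhds
    (transpose_mul_deriv_apply_self_eq_zero hU hUorth r)
    (transpose_mul_deriv_apply_self_eq_zero hV hVorth r)]

end SVDPath

section BalancedFlow

variable {d d' k : ℕ}

theorem dpow_zero (σ : Fin k → ℝ) : dpow σ 0 = 1 := by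
  simp only [dpow, Real.rpow_zero, diagonal_one]

theorem dpow_mul_mul_dpow_apply_self (σ : Fin k → ℝ) (a b : ℝ) (A : Matrix (Fin k) (Fin k) ℝ)
    (r : Fin k) :
    (dpow σ a * A * dpow σ b) r r = (σ r ^ 2) ^ a * (σ r ^ 2) ^ b * A r r := by
  simp only [dpow, mul_diagonal, diagonal_mul]
  ring

theorem transpose_mul_TN_mul (N : ℕ) (hN : 2 ≤ N) {U : Matrix (Fin d) (Fin k) ℝ}
    {V : Matrix (Fin d') (Fin k) ℝ} (hU : Uᵀ * U = 1) (hV : Vᵀ * V = 1) (σ : Fin k → ℝ)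
    (M : Matrix (Fin d) (Fin d') ℝ) :
    Uᵀ * TN N U σ V M * V = ∑ j ∈ Icc 1 N,
      dpow σ (((j : ℝ) - 1) / N) * (Uᵀ * M * V) * dpow σ (((N : ℝ) - j) / N) := by
  have hmiddle : ∀ D₁ D₂ : Matrix (Fin k) (Fin k) ℝ,
      Uᵀ * (U * D₁ * Uᵀ * M * V * D₂ * Vᵀ) * V = D₁ * (Uᵀ * M * V) * D₂ := by
    intro D₁ D₂
    calc Uᵀ * (U * D₁ * Uᵀ * M * V * D₂ * Vᵀ) * V
        = Uᵀ * U * D₁ * (Uᵀ * M * V) * D₂ * (Vᵀ * V) := by simp only [Matrix.mul_assoc]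
      _ = D₁ * (Uᵀ * M * V) * D₂ := by rw [hU, hV, Matrix.one_mul, Matrix.mul_one]
  have hfirst : ∀ D : Matrix (Fin k) (Fin k) ℝ,
      Uᵀ * (M * V * D * Vᵀ) * V = dpow σ 0 * (Uᵀ * M * V) * D := by
    intro D
    calc Uᵀ * (M * V * D * Vᵀ) * V = Uᵀ * M * V * D * (Vᵀ * V) := by simp only [Matrix.mul_assoc]
      _ = dpow σ 0 * (Uᵀ * M * V) * D := by rw [hV, dpow_zero, Matrix.one_mul, Matrix.mul_one]
  have hlast : ∀ D : Matrix (Fin k) (Fin k) ℝ,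
      Uᵀ * (U * D * Uᵀ * M) * V = D * (Uᵀ * M * V) * dpow σ 0 := by
    intro D
    calc Uᵀ * (U * D * Uᵀ * M) * V = Uᵀ * U * D * (Uᵀ * M * V) := by simp only [Matrix.mul_assoc]
      _ = D * (Uᵀ * M * V) * dpow σ 0 := by rw [hU, dpow_zero, Matrix.one_mul, Matrix.mul_one]
  obtain ⟨n, rfl⟩ : ∃ n, N = n + 2 := ⟨N - 2, by omega⟩
  rw [← add_sum_Ioc_eq_sum_Icc (by omega), ← Icc_add_one_left_eq_Ioc,
    sum_Icc_succ_top (by omega), ← add_assoc, TN, Matrix.mul_add, Matrix.mul_add,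
    Matrix.add_mul, Matrix.add_mul, Matrix.mul_sum, Matrix.sum_mul, hfirst, hlast]
  congr 2
  · simp
  · simp [hmiddle]
  · congr 2
    push_cast
    ring

theorem sum_dpow_mul_mul_dpow_apply_self (N : ℕ) (σ : Fin k → ℝ)
    (A : Matrix (Fin k) (Fin k) ℝ) (r : Fin k) :
    (∑ j ∈ Icc 1 N, dpow σ (((j : ℝ) - 1) / N) * A * dpow σ (((N : ℝ) - j) / N)) r r =
      N * (σ r ^ 2) ^ (((N : ℝ) - 1) / N) * A r r := by
  have hterm : ∀ j ∈ Icc 1 N,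
      (dpow σ (((j : ℝ) - 1) / N) * A * dpow σ (((N : ℝ) - j) / N)) r r =
        (σ r ^ 2) ^ (((N : ℝ) - 1) / N) * A r r := by
    intro j hj
    obtain ⟨hj₁, hjN⟩ := mem_Icc.mp hj
    have hj₁' : (1 : ℝ) ≤ j := by exact_mod_cast hj₁
    have hjN' : (j : ℝ) ≤ N := by exact_mod_cast hjN
    rw [dpow_mul_mul_dpow_apply_self, ← Real.rpow_add_of_nonneg (sq_nonneg _)
      (by positivity) (div_nonneg (by linarith) (Nat.cast_nonneg N))]
    congr 3
    ring
  rw [Matrix.sum_apply, sum_congr rfl hterm, sum_const, Nat.card_Icc, nsmul_eq_mul,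
    Nat.add_sub_cancel]
  ring

end BalancedFlow

theorem stmt10_general {d d' : ℕ} (N : ℕ) (hN : 2 ≤ N)
    (gradℓ : Matrix (Fin d) (Fin d') ℝ → Matrix (Fin d) (Fin d') ℝ)
    (I : Set ℝ) (hI_open : IsOpen I)
    (W W' : ℝ → Matrix (Fin d) (Fin d') ℝ)
    (U U' : ℝ → Matrix (Fin d) (Fin (min d d')) ℝ)
    (σ σ' : ℝ → Fin (min d d') → ℝ)
    (V V' : ℝ → Matrix (Fin d') (Fin (min d d')) ℝ)
    (hW : ∀ t ∈ I, ∀ p q, HasDerivAt (fun s => W s p q) (W' t p q) t)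
    (hU : ∀ t ∈ I, ∀ p q, HasDerivAt (fun s => U s p q) (U' t p q) t)
    (hσ : ∀ t ∈ I, ∀ r, HasDerivAt (fun s => σ s r) (σ' t r) t)
    (hV : ∀ t ∈ I, ∀ p q, HasDerivAt (fun s => V s p q) (V' t p q) t)
    (hSVD : ∀ t ∈ I, W t = U t * Matrix.diagonal (σ t) * (V t)ᵀ)
    (hUorth : ∀ t ∈ I, (U t)ᵀ * U t = 1)
    (hVorth : ∀ t ∈ I, (V t)ᵀ * V t = 1)
    (hdyn : ∀ t ∈ I, W' t = -TN N (U t) (σ t) (V t) (gradℓ (W t))) :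
    ∀ t ∈ I, ∀ r, σ' t r =
      -(N : ℝ) * (σ t r ^ 2) ^ (1 - 1 / (N : ℝ)) *
        ((U t)ᵀ * gradℓ (W t) * V t) r r := by
  intro t ht r
  have hI : I ∈ 𝓝 t := hI_open.mem_nhds ht
  rw [singularValue_deriv_eq (hW t ht) (hU t ht) (hσ t ht) (hV t ht)
    (eventually_of_mem hI hSVD) (eventually_of_mem hI hUorth) (eventually_of_mem hI hVorth),
    hdyn t ht, Matrix.mul_neg, Matrix.neg_mul, neg_apply,
    transpose_mul_TN_mul N hN (hUorth t ht) (hVorth t ht), sum_dpow_mul_mul_dpow_apply_self]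
  have hN₀ : (N : ℝ) ≠ 0 := by positivity
  rw [show ((N : ℝ) - 1) / N = 1 - 1 / N by field_simp]
  ring

/-- If the product matrix of a depth-`N` factorization follows a differentiable SVD path
and obeys the gradient-flow dynamics `W′(t) = −T_N(U(t), σ(t), V(t), ∇ℓ(W(t)))`, then the
signed singular values evolve by `σᵣ′(t) = −N·(σᵣ(t)²)^(1−1/N)·uᵣ(t)ᵀ·∇ℓ(W(t))·vᵣ(t)`. -/
theorem stmt10 {d d' : ℕ} (N : ℕ) (hN : 2 ≤ N)
    (ℓ : Matrix (Fin d) (Fin d') ℝ → ℝ)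
    (gradℓ : Matrix (Fin d) (Fin d') ℝ → Matrix (Fin d) (Fin d') ℝ)
    (hgrad : ∀ Wm H, HasDerivAt (fun s : ℝ => ℓ (Wm + s • H))
      (((gradℓ Wm)ᵀ * H).trace) 0)
    (I : Set ℝ) (hI_open : IsOpen I) (hI_conn : I.OrdConnected)
    (W W' : ℝ → Matrix (Fin d) (Fin d') ℝ)
    (U U' : ℝ → Matrix (Fin d) (Fin (min d d')) ℝ)
    (σ σ' : ℝ → Fin (min d d') → ℝ)
    (V V' : ℝ → Matrix (Fin d') (Fin (min d d')) ℝ)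
    (hW : ∀ t ∈ I, ∀ p q, HasDerivAt (fun s => W s p q) (W' t p q) t)
    (hU : ∀ t ∈ I, ∀ p q, HasDerivAt (fun s => U s p q) (U' t p q) t)
    (hσ : ∀ t ∈ I, ∀ r, HasDerivAt (fun s => σ s r) (σ' t r) t)
    (hV : ∀ t ∈ I, ∀ p q, HasDerivAt (fun s => V s p q) (V' t p q) t)
    (hSVD : ∀ t ∈ I, W t = U t * Matrix.diagonal (σ t) * (V t)ᵀ)
    (hUorth : ∀ t ∈ I, (U t)ᵀ * U t = 1)
    (hVorth : ∀ t ∈ I, (V t)ᵀ * V t = 1)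
    (hdyn : ∀ t ∈ I, W' t = -TN N (U t) (σ t) (V t) (gradℓ (W t))) :
    ∀ t ∈ I, ∀ r, σ' t r =
      -(N : ℝ) * (σ t r ^ 2) ^ (1 - 1 / (N : ℝ)) *
        ((U t)ᵀ * gradℓ (W t) * V t) r r :=
  stmt10_general N hN gradℓ I hI_open W W' U U' σ σ' V V' hW hU hσ hV hSVD hUorth hVorth hdyn
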